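/- arXiv:2506.17613 — 4 statements merged into one kernel-verified Lean document; each statement's English description precedes it below -/
import Mathlib

section
/- In the LZ77 factorization of a string T, every substring S of T has a primary occurrence, i.e., an occurrence T[i..j] = S such that some phrase-start position s_h satisfies i ≤ s_h ≤ j. -/
/-- `S` occurs in `T` at (0-indexed) starting position `i`. -/
def occursAt {α : Type*} (T S : List α) (i : ℕ) : Prop :=
  i + S.length ≤ T.length ∧ (T.drop i).take S.length = S

/-- `starts` is the list of (0-indexed) phrase starting positions of the LZ77
factorization of `T`: starts are strictly increasing, begin at position 0, and
each phrase `T[p..e-1]` (where `e` is the next start, or `|T|` for the last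
phrase) is either the first occurrence of the letter `T[p]`, or a maximal-length
substring having an occurrence starting strictly before `p`. -/
def IsLZ77 {α : Type*} (T : List α) (starts : List ℕ) : Prop :=
  starts.Chain' (· < ·) ∧
  (T = [] ↔ starts = []) ∧
  (T ≠ [] → starts.head? = some 0) ∧
  ∀ k p e, starts[k]? = some p →
    (starts[k + 1]? = some e ∨ (starts[k + 1]? = none ∧ e = T.length)) →
    p < e ∧ e ≤ T.length ∧
    ((¬ ∃ i' < p, occursAt T ((T.drop p).take 1) i') → e = p + 1) ∧
    ((∃ i' < p, occursAt T ((T.drop p).take 1) i') →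
      (∃ i' < p, occursAt T ((T.drop p).take (e - p)) i') ∧
      (e = T.length ∨ ¬ ∃ i' < p, occursAt T ((T.drop p).take (e - p + 1)) i'))

/-- An occurrence of `W` at `i'` yields an occurrence of any window of `W`. -/
lemma occursAt_sub {α : Type*} {T W : List α} {i' d L : ℕ}
    (hW : occursAt T W i') (hdL : d + L ≤ W.length) :
    occursAt T ((W.drop d).take L) (i' + d) := by
  obtain ⟨hlen, heq⟩ := hW
  have hlenW : ((W.drop d).take L).length = L := by
    simp [Nat.min_eq_left (by omega : L ≤ W.length - d)]
  constructor
  · omega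
  · rw [hlenW]
    have : (T.drop (i' + d)).take L = ((T.drop i').drop d).take L := by
      rw [List.drop_drop]
    rw [this]
    conv_rhs => rw [← heq]
    rw [List.drop_take, List.take_take]
    congr 1
    omega

/-- Every (nonempty) substring `S` of `T` has a primary occurrence with respect
to the LZ77 factorization of `T`, i.e. an occurrence `T[i..j] = S` containing
some phrase start `s` with `i ≤ s ≤ j`. -/
theorem stmt8 {α : Type*} (T : List α) (starts : List ℕ) (h : IsLZ77 T starts) :
    ∀ S : List α, S ≠ [] → S <:+: T →
      ∃ i, occursAt T S i ∧ ∃ s ∈ starts, i ≤ s ∧ s < i + S.length := by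
  intro S hS hinf
  obtain ⟨hchain, hempty, hhead, hphrase⟩ := h
  have hSlen : 0 < S.length := List.length_pos_iff.mpr hS
  -- initial occurrence
  obtain ⟨u, v, huv⟩ := hinf
  have hdropu : T.drop u.length = S ++ v := by
    rw [← huv, List.append_assoc, List.drop_left]
  have hocc0 : occursAt T S u.length := by
    constructor
    · rw [← huv]; simp [List.length_append]
    · rw [hdropu, List.take_left]
  have hTne : T ≠ [] := by
    intro hT
    rw [hT] at huv
    simp only [List.append_eq_nil_iff] at huv
    exact hS huv.1.2
  have hhead0 : starts[0]? = some 0 := by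
    have := hhead hTne
    cases starts with
    | nil => simp at this
    | cons a l => simpa using this
  -- strong induction on the occurrence position
  have key : ∀ i, occursAt T S i →
      ∃ i, occursAt T S i ∧ ∃ s ∈ starts, i ≤ s ∧ s < i + S.length := by
    intro i
    induction i using Nat.strong_induction_on with
    | _ i IH =>
      intro hocc
      by_cases hprim : ∃ s ∈ starts, i ≤ s ∧ s < i + S.length
      · exact ⟨i, hocc, hprim⟩
      push_neg at hprim
      -- find the phrase containing position i
      have hiT : i < T.length := by
        obtain ⟨hl, _⟩ := hocc; omega
      set P : ℕ → Prop := fun k => k < starts.length ∧ starts.getD k 0 ≤ i with hP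
      have hP0 : P 0 := by
        have h0lt : 0 < starts.length := by
          cases starts with
          | nil => simp at hhead0
          | cons a l => simp
        refine ⟨h0lt, ?_⟩
        have : starts[0]? = some (starts.getD 0 0) := by
          rw [List.getD_eq_getElem _ _ h0lt, List.getElem?_eq_getElem]
        rw [hhead0] at this
        simp only [Option.some.injEq] at this
        omega
      set k := Nat.findGreatest P (starts.length - 1) with hk
      have hPk : P k := Nat.findGreatest_spec (by omega) hP0
      obtain ⟨hklt, hple⟩ := hPk
      set p := starts.getD k 0 with hp'
      have hpk : starts[k]? = some p := by
        rw [hp', List.getD_eq_getElem _ _ hklt, List.getElem?_eq_getElem]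
      have hpmem : p ∈ starts := List.mem_of_getElem? hpk
      have hpi : p < i := by
        rcases Nat.lt_or_ge p i with h' | h'
        · exact h'
        · exact absurd (hprim p hpmem (by omega)) (by omega)
      -- determine the phrase end
      have hnext : ∃ e, (starts[k + 1]? = some e ∨ (starts[k + 1]? = none ∧ e = T.length))
          ∧ i + S.length ≤ e := by
        rcases Nat.lt_or_ge (k + 1) starts.length with hlt | hge
        · refine ⟨starts.getD (k+1) 0, Or.inl ?_, ?_⟩
          · rw [List.getD_eq_getElem _ _ hlt, List.getElem?_eq_getElem]
          · have hnP : ¬ P (k + 1) :=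
              Nat.findGreatest_is_greatest
                (show Nat.findGreatest P (starts.length - 1) < k + 1 by omega) (by omega)
            have hgt : i < starts.getD (k+1) 0 := by
              by_contra hc
              push_neg at hc
              exact hnP ⟨hlt, hc⟩
            have hmem : starts.getD (k+1) 0 ∈ starts := by
              apply List.mem_of_getElem?
              rw [List.getD_eq_getElem _ _ hlt, List.getElem?_eq_getElem]
            rcases Nat.lt_or_ge (starts.getD (k+1) 0) (i + S.length) with h' | h'
            · exact absurd (hprim _ hmem (by omega)) (by omega)
            · exact h'
        · exact ⟨T.length, Or.inr ⟨List.getElem?_eq_none hge, rfl⟩, hocc.1⟩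
      obtain ⟨e, he, heS⟩ := hnext
      obtain ⟨hpe, heT, hletter, hcopy⟩ := hphrase k p e hpk he
      -- the phrase can't be a single fresh letter
      have hfirst : ∃ i' < p, occursAt T ((T.drop p).take 1) i' := by
        by_contra hc
        have := hletter hc
        omega
      obtain ⟨⟨i', hi'p, hocc'⟩, _⟩ := hcopy hfirst
      -- S is a window of the phrase
      have hWlen : ((T.drop p).take (e - p)).length = e - p := by
        simp; omega
      have hsub := occursAt_sub hocc' (d := i - p) (L := S.length) (by omega)
      have hSeq : (((T.drop p).take (e - p)).drop (i - p)).take S.length = S := by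
        rw [List.drop_take, List.take_take, List.drop_drop]
        have h1 : S.length ⊓ (e - p - (i - p)) = S.length := by
          apply Nat.min_eq_left; omega
        have h2 : p + (i - p) = i := by omega
        rw [h1, h2]
        exact hocc.2
      rw [hSeq] at hsub
      exact IH (i' + (i - p)) (by omega) hsub
  exact key u.length hocc0
end

section
/- With T' constructed from T as above using parameter B, every substring S of T with |S| ≤ B occurs in T' (as a #-free substring), and conversely every #-free substring of T' of length at most B occurs in T. Hence the set of distinct substrings of length ≤ B is the same for T and for the #-free substrings of T'. -/
/-- Position `i` is within distance `< B` of some phrase start. -/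
def nearStart (starts : List ℕ) (B i : ℕ) : Bool :=
  starts.any (fun s => decide (max (i - s) (s - i) < B))

/-- The string `T'` built from `T`: each position within distance `< B` of a
phrase start is copied (as `some (T[i])`); each maximal run of remaining
positions is replaced by a single separator `none` (playing the role of `#`). -/
def buildTPrime {α : Type*} (T : List α) (starts : List ℕ) (B : ℕ) : List (Option α) :=
  (List.range T.length).flatMap (fun i =>
    if nearStart starts B i then ((T.drop i).take 1).map some
    else if i = 0 ∨ nearStart starts B (i - 1) then [none] else [])

namespace List

theorem flatMap_range'_take_one_drop {α : Type*} (T : List α) (i m : ℕ) :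
    (range' i m).flatMap (fun j => (T.drop j).take 1) = (T.drop i).take m := by
  induction m generalizing i with
  | zero => simp
  | succ m ih =>
    rw [range'_succ, flatMap_cons, ih, Nat.add_comm m, take_add, drop_drop]

theorem exists_cons_suffix_of_cons_infix_flatMap {α β : Type*} {f : α → List β}
    {l : List α} {x : β} {w : List β} (hf : ∀ a ∈ l, (f a).length ≤ 1)
    (h : x :: w <:+: l.flatMap f) :
    ∃ a l', a :: l' <:+ l ∧ f a = [x] ∧ w <+: l'.flatMap f := by
  induction l with
  | nil => simp at h
  | cons b l ih =>
    have ih' : x :: w <:+: l.flatMap f → ∃ a l', a :: l' <:+ b :: l ∧ f a = [x] ∧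
        w <+: l'.flatMap f := fun h => by
      obtain ⟨a, l', hsuf, hfa, hw⟩ := ih (fun a ha => hf a (mem_cons_of_mem b ha)) h
      exact ⟨a, l', hsuf.trans (suffix_cons b l), hfa, hw⟩
    rw [flatMap_cons] at h
    match hb : f b, hf b mem_cons_self with
    | [], _ => exact ih' (by simpa [hb] using h)
    | [c], _ =>
      rw [hb, singleton_append, infix_cons_iff, cons_prefix_cons] at h
      rcases h with ⟨rfl, hw⟩ | h
      · exact ⟨b, l, suffix_refl _, hb, hw⟩
      · exact ih' h

theorem eq_range'_of_cons_suffix_range {a n : ℕ} {l : List ℕ} (h : a :: l <:+ range n) :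
    a < n ∧ l = range' (a + 1) (n - (a + 1)) := by
  rw [suffix_iff_eq_drop, range_eq_range', drop_range', eq_comm, range'_eq_cons_iff] at h
  simp only [length_range', length_cons, Nat.zero_add, Nat.mul_one] at h
  obtain ⟨ha, hpos, hl⟩ := h
  exact ⟨by omega, hl.trans (congrArg (range' (a + 1)) (by omega))⟩

theorem range_eq_range'_append_range'_append {i m n : ℕ} (h : i + m ≤ n) :
    range n = range' 0 i ++ range' i m ++ range' (i + m) (n - (i + m)) := by
  obtain ⟨r, rfl⟩ := Nat.exists_eq_add_of_le h
  rw [range_eq_range', ← range'_append_1, ← range'_append_1]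
  simp

end List

open List

theorem nearStart_of_mem {starts : List ℕ} {B j s : ℕ} (hs : s ∈ starts)
    (h : max (j - s) (s - j) < B) : nearStart starts B j = true :=
  any_eq_true.2 ⟨s, hs, decide_eq_true h⟩

section Pieces

variable {α : Type*} (T : List α) (starts : List ℕ) (B : ℕ)

def buildTPrimePiece (i : ℕ) : List (Option α) :=
  if nearStart starts B i then ((T.drop i).take 1).map some
  else if i = 0 ∨ nearStart starts B (i - 1) then [none] else []

theorem buildTPrime_eq_flatMap :
    buildTPrime T starts B = (range T.length).flatMap (buildTPrimePiece T starts B) := rfl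

variable {T starts B}

theorem length_buildTPrimePiece_le_one (i : ℕ) :
    (buildTPrimePiece T starts B i).length ≤ 1 := by
  unfold buildTPrimePiece
  split_ifs <;> simp

theorem buildTPrimePiece_of_nearStart {i : ℕ} (h : nearStart starts B i = true)
    (hi : i < T.length) : buildTPrimePiece T starts B i = [some T[i]] := by
  rw [buildTPrimePiece, if_pos h, drop_eq_getElem_cons hi]
  rfl

theorem buildTPrimePiece_of_nearStart_pred {i : ℕ} (h : nearStart starts B i = false)
    (h' : nearStart starts B (i - 1) = true) : buildTPrimePiece T starts B i = [none] := by
  simp [buildTPrimePiece, h, h']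

theorem nearStart_of_buildTPrimePiece_eq_some {i : ℕ} {x : α}
    (h : buildTPrimePiece T starts B i = [some x]) : nearStart starts B i = true := by
  unfold buildTPrimePiece at h
  split_ifs at h with hnear
  · exact hnear
  all_goals simp at h

theorem flatMap_range'_buildTPrimePiece {i m : ℕ}
    (h : ∀ j, i ≤ j → j < i + m → nearStart starts B j = true) :
    (range' i m).flatMap (buildTPrimePiece T starts B) = ((T.drop i).take m).map some := by
  rw [← flatMap_range'_take_one_drop, map_flatMap]
  refine flatMap_congr fun j hj => ?_
  rw [mem_range'_1] at hj
  simp [buildTPrimePiece, h j hj.1 hj.2]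

-- A position dropped right after a copied one contributes a `#`, so a `#`-free stretch
-- cannot skip positions.
theorem prefix_drop_of_map_some_prefix {a m : ℕ} {S : List α}
    (ha : nearStart starts B a = true) (hm : a + 1 + m ≤ T.length)
    (hS : S.map some <+: (range' (a + 1) m).flatMap (buildTPrimePiece T starts B)) :
    S <+: T.drop (a + 1) := by
  induction m generalizing a S with
  | zero => simp_all
  | succ m ih =>
    rcases S with _ | ⟨x, S⟩
    · exact nil_prefix
    rw [range'_succ, flatMap_cons] at hS
    cases hnext : nearStart starts B (a + 1) with
    | false =>
      rw [buildTPrimePiece_of_nearStart_pred hnext (by simpa using ha)] at hS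
      simp at hS
    | true =>
      rw [buildTPrimePiece_of_nearStart hnext (by omega), map_cons, singleton_append,
        cons_prefix_cons, Option.some_inj] at hS
      rw [drop_eq_getElem_cons (by omega), cons_prefix_cons]
      exact ⟨hS.1, ih hnext (by omega) hS.2⟩

theorem map_some_infix_buildTPrime_of_occursAt {S : List α} {i : ℕ} (hocc : occursAt T S i)
    (hnear : ∀ j, i ≤ j → j < i + S.length → nearStart starts B j = true) :
    S.map some <:+: buildTPrime T starts B := by
  rw [buildTPrime_eq_flatMap, range_eq_range'_append_range'_append hocc.1, flatMap_append,
    flatMap_append, flatMap_range'_buildTPrimePiece hnear, hocc.2]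
  exact infix_append _ _ _

theorem infix_of_map_some_infix_buildTPrime {S : List α}
    (h : S.map some <:+: buildTPrime T starts B) : S <:+: T := by
  rcases S with _ | ⟨x, S⟩
  · exact nil_infix
  rw [buildTPrime_eq_flatMap, map_cons] at h
  obtain ⟨a, l, hsuf, hpiece, hS⟩ := exists_cons_suffix_of_cons_infix_flatMap
    (fun a _ => length_buildTPrimePiece_le_one a) h
  obtain ⟨ha, rfl⟩ := eq_range'_of_cons_suffix_range hsuf
  have hnear := nearStart_of_buildTPrimePiece_eq_some hpiece
  rw [buildTPrimePiece_of_nearStart hnear ha, singleton_inj, Option.some_inj] at hpiece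
  have hprefix : x :: S <+: T.drop a := by
    rw [drop_eq_getElem_cons ha, hpiece]
    exact cons_prefix_cons.2 ⟨rfl, prefix_drop_of_map_some_prefix hnear (by omega) hS⟩
  exact hprefix.isInfix.trans (drop_suffix a T).isInfix

end Pieces

theorem stmt10_general {α : Type*} (T : List α) (starts : List ℕ) (B : ℕ)
    (hprim : ∀ S : List α, S ≠ [] → S <:+: T →
      ∃ i, occursAt T S i ∧ ∃ s ∈ starts, i ≤ s ∧ s < i + S.length) :
    ∀ S : List α, S.length ≤ B →
      (S <:+: T ↔ (S.map some) <:+: buildTPrime T starts B) := by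
  intro S hSB
  refine ⟨fun hinf => ?_, infix_of_map_some_infix_buildTPrime⟩
  rcases eq_or_ne S [] with rfl | hne
  · exact nil_infix
  obtain ⟨i, hocc, s, hs, his, hsi⟩ := hprim S hne hinf
  exact map_some_infix_buildTPrime_of_occursAt hocc
    fun j hij hj => nearStart_of_mem hs (by omega)

/-- Given that every substring of `T` has a primary occurrence (one crossing a
phrase start), every substring `S` of `T` with `|S| ≤ B` occurs in `T'` as a
`#`-free substring, and conversely every `#`-free substring of `T'` of length
at most `B` occurs in `T`. Hence `T` and the `#`-free substrings of `T'` have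
the same set of distinct substrings of length at most `B`. -/
theorem stmt10 {α : Type*} (T : List α) (starts : List ℕ) (B : ℕ) (hB : 1 ≤ B)
    (h0 : T ≠ [] → 0 ∈ starts)
    (hlt : ∀ s ∈ starts, s < T.length)
    (hprim : ∀ S : List α, S ≠ [] → S <:+: T →
      ∃ i, occursAt T S i ∧ ∃ s ∈ starts, i ≤ s ∧ s < i + S.length) :
    ∀ S : List α, S.length ≤ B →
      (S <:+: T ↔ (S.map some) <:+: buildTPrime T starts B) :=
  stmt10_general T starts B hprim
end

section
/- For suffix array rank positions i < j, the longest common prefix of suffixes T[SA[i]..n] and T[SA[j]..n] has length equal to min{LCP[k] : i < k ≤ j}. -/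
/-- Length of the longest common prefix of two lists. -/
def commonPrefixLen {α : Type*} [DecidableEq α] : List α → List α → ℕ
  | a :: as, b :: bs => if a = b then commonPrefixLen as bs + 1 else 0
  | _, _ => 0

lemma cpl_min {α : Type*} [LinearOrder α] :
    ∀ (a b c : List α), List.Lex (· < ·) a b → List.Lex (· < ·) b c →
      commonPrefixLen a c = min (commonPrefixLen a b) (commonPrefixLen b c)
  | [], b, c, _, _ => by
      cases b <;> cases c <;> simp [commonPrefixLen]
  | x :: as, _, _, hab, hbc => by
      cases hab with
      | rel h =>
        cases hbc with
        | rel h2 => simp [commonPrefixLen, (h.trans h2).ne, h.ne]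
        | cons h2 => simp [commonPrefixLen, h.ne]
      | cons h =>
        cases hbc with
        | rel h2 => simp [commonPrefixLen, h2.ne]
        | cons h2 =>
          have := cpl_min as _ _ h h2
          simp [commonPrefixLen, this]

/-- For suffix array rank positions `i < j`, the longest common prefix of the
suffixes `T[SA[i]..]` and `T[SA[j]..]` has length `min { LCP[k] : i < k ≤ j }`. -/
theorem stmt12 {α : Type*} [LinearOrder α] (T : List α)
    (SA : Fin T.length → Fin T.length) (hbij : Function.Bijective SA)
    (LCP : Fin T.length → ℕ)
    (hsorted : ∀ i j : Fin T.length, i < j →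
      List.Lex (· < ·) (T.drop (SA i).val) (T.drop (SA j).val))
    (hLCP : ∀ k : Fin T.length, 0 < k.val →
      LCP k = commonPrefixLen
        (T.drop (SA ⟨k.val - 1, lt_of_le_of_lt (Nat.sub_le _ _) k.isLt⟩).val)
        (T.drop (SA k).val))
    (hLCP0 : ∀ k : Fin T.length, k.val = 0 → LCP k = 0) :
    ∀ i j : Fin T.length, ∀ hij : i < j,
      commonPrefixLen (T.drop (SA i).val) (T.drop (SA j).val) =
        (Finset.Ioc i j).inf' (Finset.nonempty_Ioc.mpr hij) LCP := by
  suffices H : ∀ d : ℕ, ∀ i j : Fin T.length, ∀ hij : i < j, j.val = i.val + d + 1 →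
      commonPrefixLen (T.drop (SA i).val) (T.drop (SA j).val) =
        (Finset.Ioc i j).inf' (Finset.nonempty_Ioc.mpr hij) LCP by
    intro i j hij
    exact H (j.val - i.val - 1) i j hij (by have := Fin.lt_def.mp hij; omega)
  intro d
  induction d with
  | zero =>
    intro i j hij hd
    have hIoc : Finset.Ioc i j = {j} := by
      ext k
      simp only [Finset.mem_Ioc, Finset.mem_singleton, Fin.lt_def, Fin.le_def, Fin.ext_iff]
      omega
    have he : (⟨j.val - 1, lt_of_le_of_lt (Nat.sub_le _ _) j.isLt⟩ : Fin T.length) = i :=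
      Fin.ext (by simp only []; omega)
    have hLj : LCP j = commonPrefixLen (T.drop (SA i).val) (T.drop (SA j).val) := by
      rw [hLCP j (by omega), he]
    simp only [hIoc, Finset.inf'_singleton, hLj]
  | succ d IH =>
    intro i j hij hd
    have hj1 : j.val - 1 < T.length := lt_of_le_of_lt (Nat.sub_le _ _) j.isLt
    set j' : Fin T.length := ⟨j.val - 1, hj1⟩ with hj'
    have hij' : i < j' := by simp [Fin.lt_def, hj']; omega
    have hj'j : j' < j := by simp [Fin.lt_def, hj']; omega
    have key := cpl_min _ _ _ (hsorted i j' hij') (hsorted j' j hj'j)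
    have IH' := IH i j' hij' (by simp [hj']; omega)
    have hins : Finset.Ioc i j = insert j (Finset.Ioc i j') := by
      ext k
      simp only [Finset.mem_Ioc, Finset.mem_insert, Fin.lt_def, Fin.le_def, Fin.ext_iff, hj']
      omega
    have he : (⟨j.val - 1, lt_of_le_of_lt (Nat.sub_le _ _) j.isLt⟩ : Fin T.length) = j' :=
      Fin.ext (by simp [hj'])
    have hLj : LCP j = commonPrefixLen (T.drop (SA j').val) (T.drop (SA j).val) := by
      rw [hLCP j (by omega), he]
    rw [key, IH', ← hLj]
    simp only [hins]
    rw [Finset.inf'_insert (H := Finset.nonempty_Ioc.mpr hij'), inf_comm]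
end

section
/- The number of maximal intervals produced in Phase 2 of the CPM algorithm (cutting the LCP array at positions with value < m) equals the number of distinct length-m substrings of T plus the number of suffixes of T shorter than m; in particular, if T ends with a unique terminator and all suffixes of length < m are counted as singleton intervals, the intervals of size ≥ 1 containing suffixes of length ≥ m are in bijection with the distinct length-m substrings of T. -/
open Finset

theorem le_commonPrefixLen_iff {α : Type*} [DecidableEq α] :
    ∀ {m : ℕ} {a b : List α},
      m ≤ commonPrefixLen a b ↔ m ≤ a.length ∧ m ≤ b.length ∧ a.take m = b.take m
  | 0, _, _ => by simp
  | _ + 1, [], _ => by simp [commonPrefixLen]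
  | _ + 1, _ :: _, [] => by simp [commonPrefixLen]
  | m + 1, a :: as, b :: bs => by
    by_cases hab : a = b
    · simp [commonPrefixLen, hab, le_commonPrefixLen_iff (m := m)]
    · simp [commonPrefixLen, hab]

theorem commonPrefixLen_le_length_right {α : Type*} [DecidableEq α] (a b : List α) :
    commonPrefixLen a b ≤ b.length :=
  (le_commonPrefixLen_iff.mp le_rfl).2.1

namespace List

variable {α : Type*} [LinearOrder α]

theorem take_le_take_of_lt {x y : List α} (h : x < y) (m : ℕ) : x.take m ≤ y.take m := by
  induction h generalizing m with
  | nil => rw [take_nil]; exact le_of_not_gt (not_lt_nil _)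
  | cons _ ih =>
    cases m with
    | zero => exact le_rfl
    | succ m => exact cons_le_cons _ (ih m)
  | rel hab =>
    cases m with
    | zero => exact le_rfl
    | succ m => exact le_of_lt (show _ < _ from Lex.rel hab)

theorem monotone_take (m : ℕ) : Monotone (take m : List α → List α) := fun _ _ h =>
  h.lt_or_eq.elim (take_le_take_of_lt · m) (fun e => e ▸ le_rfl)

theorem take_eq_of_le_of_le {m : ℕ} {x y z : List α} (hxy : x ≤ y) (hyz : y ≤ z)
    (hxz : x.take m = z.take m) : y.take m = x.take m :=
  le_antisymm (hxz ▸ monotone_take m hyz) (monotone_take m hxy)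

end List

def lcpArray {α : Type*} [DecidableEq α] {n : ℕ} (s : Fin n → List α) : Fin n → ℕ
  | ⟨0, _⟩ => 0
  | ⟨i + 1, h⟩ => commonPrefixLen (s ⟨i, by omega⟩) (s ⟨i + 1, h⟩)

section lcpArray

variable {α : Type*} {n m : ℕ}

theorem lcpArray_le_length [DecidableEq α] (s : Fin n → List α) :
    ∀ k, lcpArray s k ≤ (s k).length
  | ⟨0, _⟩ => Nat.zero_le _
  | ⟨_ + 1, _⟩ => commonPrefixLen_le_length_right _ _

theorem exists_lcpArray_lt_take_eq [DecidableEq α] (s : Fin n → List α) (hm : 0 < m) :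
    ∀ j, m ≤ (s j).length →
      ∃ j', lcpArray s j' < m ∧ m ≤ (s j').length ∧ (s j').take m = (s j).take m
  | ⟨0, h⟩, hj => ⟨⟨0, h⟩, hm, hj, rfl⟩
  | ⟨i + 1, h⟩, hj => by
    by_cases hcut : lcpArray s ⟨i + 1, h⟩ < m
    · exact ⟨_, hcut, hj, rfl⟩
    obtain ⟨hprev, -, htake⟩ := le_commonPrefixLen_iff.mp (not_lt.mp hcut)
    obtain ⟨j', hcut', hlen', htake'⟩ := exists_lcpArray_lt_take_eq s hm ⟨i, by omega⟩ hprev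
    exact ⟨j', hcut', hlen', htake'.trans htake⟩

variable [LinearOrder α] {s : Fin n → List α}

theorem take_ne_of_lt_of_lcpArray_lt (hs : Monotone s) {j j' : Fin n} (hjj' : j < j')
    (hj : m ≤ (s j).length) (hcut : lcpArray s j' < m) : (s j).take m ≠ (s j').take m := by
  intro heq
  rcases j' with ⟨_ | i, h⟩
  · exact (Nat.not_lt_zero _ hjj').elim
  have hji : j ≤ ⟨i, by omega⟩ := Fin.le_def.mpr (Nat.le_of_lt_succ hjj')
  have hlen : ∀ {l : List α}, l.take m = (s j).take m → m ≤ l.length := fun h' => by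
    simpa [hj] using congrArg List.length h'
  have hprev : (s ⟨i, by omega⟩).take m = (s j).take m :=
    List.take_eq_of_le_of_le (hs hji) (hs (Fin.mk_le_mk.mpr i.le_succ)) heq
  exact hcut.not_ge (le_commonPrefixLen_iff.mpr ⟨hlen hprev, hlen heq.symm, hprev.trans heq⟩)

end lcpArray

section cuts

variable {α : Type*} [LinearOrder α] {n m : ℕ} {s : Fin n → List α}

theorem injOn_take_setOf_lcpArray_lt (hs : Monotone s) :
    Set.InjOn (fun j => (s j).take m) {j | lcpArray s j < m ∧ m ≤ (s j).length} := by
  intro j hj j' hj' heq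
  by_contra hne
  rcases lt_or_gt_of_ne hne with h | h
  · exact take_ne_of_lt_of_lcpArray_lt hs h hj.2 hj'.1 heq
  · exact take_ne_of_lt_of_lcpArray_lt hs h hj'.2 hj.1 heq.symm

theorem card_filter_lcpArray_lt (hs : Monotone s) (hm : 0 < m) :
    #(univ.filter fun j => lcpArray s j < m) =
      #(univ.filter fun j => (s j).length < m) +
        #((univ.filter fun j => m ≤ (s j).length).image fun j => (s j).take m) := by
  have hshort : ((univ.filter fun j => lcpArray s j < m).filter fun j => (s j).length < m) =
      univ.filter fun j => (s j).length < m := by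
    ext j
    simpa using fun h => (lcpArray_le_length s j).trans_lt h
  have hlong : ((univ.filter fun j => lcpArray s j < m).filter fun j => ¬(s j).length < m) =
      univ.filter fun j => lcpArray s j < m ∧ m ≤ (s j).length := by
    simp only [filter_filter, not_lt]
  have himage : ((univ.filter fun j => lcpArray s j < m ∧ m ≤ (s j).length).image
      fun j => (s j).take m) =
        (univ.filter fun j => m ≤ (s j).length).image fun j => (s j).take m := by
    ext S
    simp only [mem_image, mem_filter, mem_univ, true_and]
    constructor
    · rintro ⟨j, ⟨-, hj⟩, rfl⟩
      exact ⟨j, hj, rfl⟩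
    · rintro ⟨j, hj, rfl⟩
      obtain ⟨j', hcut, hlen, htake⟩ := exists_lcpArray_lt_take_eq s hm j hj
      exact ⟨j', ⟨hcut, hlen⟩, htake⟩
  rw [← card_filter_add_card_filter_not (fun j => (s j).length < m), hshort, hlong, ← himage,
    card_image_of_injOn (by simpa using injOn_take_setOf_lcpArray_lt hs)]

end cuts

theorem card_filter_length_drop_lt {α : Type*} (T : List α) (m : ℕ) :
    #(univ.filter fun i : Fin T.length => (T.drop i).length < m) = min (m - 1) T.length := by
  rw [show min (m - 1) T.length = #(Ico (T.length - (m - 1)) T.length) by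
    rw [Nat.card_Ico]; omega]
  refine card_nbij Fin.val (fun i hi => ?_) Fin.val_injective.injOn (fun k hk => ?_)
  · simp only [mem_coe, mem_filter, mem_univ, true_and, List.length_drop, mem_Ico] at hi ⊢
    omega
  · simp only [mem_coe, mem_Ico] at hk
    refine ⟨⟨k, hk.2⟩, ?_, rfl⟩
    simp only [mem_coe, mem_filter, mem_univ, true_and, List.length_drop]
    omega

theorem coe_image_take_drop_eq_setOf_infix {α : Type*} [DecidableEq α] (T : List α) {m : ℕ}
    (hm : 0 < m) :
    (((univ.filter fun i : Fin T.length => m ≤ (T.drop i).length).image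
      fun i : Fin T.length => (T.drop i).take m : Finset (List α)) : Set (List α)) =
        {S | S.length = m ∧ S <:+: T} := by
  ext S
  simp only [coe_image, coe_filter, Set.mem_image, Set.mem_ofPred_eq]
  constructor
  · rintro ⟨i, hi, rfl⟩
    exact ⟨by simpa using hi,
      ((T.drop i).take_prefix m).isInfix.trans (T.drop_suffix i).isInfix⟩
  · rintro ⟨hlen, u, v, rfl⟩
    have hu : u.length < (u ++ S ++ v).length := by
      simp only [List.append_assoc, List.length_append]
      omega
    refine ⟨⟨u.length, hu⟩, by simp [hlen], ?_⟩
    simp [← hlen]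

open Classical in
/-- The number of maximal intervals produced by cutting the LCP array at
positions with value `< m` (equivalently, the number of such cut positions)
equals the number of distinct length-`m` substrings of `T` plus the number of
suffixes of `T` shorter than `m` (which is `min (m-1) n`). -/
theorem stmt15 {α : Type*} [LinearOrder α] (T : List α) (m : ℕ) (hm : 1 ≤ m)
    (SA : Fin T.length → Fin T.length) (hbij : Function.Bijective SA)
    (LCP : Fin T.length → ℕ)
    (hsorted : ∀ i j : Fin T.length, i < j →
      List.Lex (· < ·) (T.drop (SA i).val) (T.drop (SA j).val))
    (hLCP : ∀ k : Fin T.length, 0 < k.val →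
      LCP k = commonPrefixLen
        (T.drop (SA ⟨k.val - 1, lt_of_le_of_lt (Nat.sub_le _ _) k.isLt⟩).val)
        (T.drop (SA k).val))
    (hLCP0 : ∀ k : Fin T.length, k.val = 0 → LCP k = 0) :
    (Finset.univ.filter (fun j : Fin T.length => LCP j < m)).card =
      {S : List α | S.length = m ∧ S <:+: T}.ncard + min (m - 1) T.length := by
  set s : Fin T.length → List α := fun j => T.drop (SA j)
  have hs : Monotone s := StrictMono.monotone hsorted
  have hLCP_eq : LCP = lcpArray s := by
    funext k
    rcases k with ⟨_ | i, h⟩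
    · exact hLCP0 _ rfl
    · exact hLCP _ i.succ_pos
  have hshort : #(univ.filter fun j => (s j).length < m) = min (m - 1) T.length :=
    (card_bijective SA hbij (by simp [s])).trans (card_filter_length_drop_lt T m)
  have hlong : ((univ.filter fun j => m ≤ (s j).length).image fun j => (s j).take m) =
      (univ.filter fun i : Fin T.length => m ≤ (T.drop i).length).image
        fun i : Fin T.length => (T.drop i).take m := by
    conv_rhs => rw [← image_univ_of_surjective hbij.2, filter_image, image_image]
    rfl
  rw [hLCP_eq, card_filter_lcpArray_lt hs hm, hshort, hlong, ← Set.ncard_coe_finset,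
    coe_image_take_drop_eq_setOf_infix T hm, add_comm]
end
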